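/- For a Riordan array D = (g, f) with entries d_{n,k} = [t^n] g·f^k, and a sequence A with generating function A(t) satisfying A(0) ≠ 0, the recurrence d_{n+1,k+1} = Σ_{j≥0} a_j d_{n,k+j} holds for all n, k ≥ 0 if and only if f(t) = t·A(f(t)). -/

import Mathlib

open PowerSeries

/-- Composition `g ∘ f` of formal power series (meaningful when `f` has zero
constant term). -/
noncomputable def pcomp {K : Type*} [Field K] (g f : PowerSeries K) : PowerSeries K :=
  PowerSeries.mk fun n => ∑ k ∈ Finset.range (n + 1), coeff k g * coeff n (f ^ k)

/-! Since `f` has no constant term, `[tⁿ] h·fʲ = 0` for `j > n`, so `[tⁿ] h·A(f) = Σ_{j ≤ n} aⱼ [tⁿ] h·fʲ`.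
With `h = g·fᵏ` the recurrence therefore says `[tⁿ⁺¹] g·fᵏ·f = [tⁿ⁺¹] g·fᵏ·(t·A(f))` for all `n, k`.
This follows from `f = t·A(f)`; conversely, its case `k = 0`, together with the vanishing constant
terms, gives `g·f = g·t·A(f)`, and `g ≠ 0` may be cancelled. -/

namespace PowerSeries

theorem coeff_pow_eq_zero_of_lt {R : Type*} [CommSemiring R] {φ : PowerSeries R}
    (hφ : constantCoeff φ = 0) {n k : ℕ} (h : n < k) : coeff n (φ ^ k) = 0 :=
  X_pow_dvd_iff.mp (pow_dvd_pow_of_dvd (X_dvd_iff.mpr hφ) k) n h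

variable {K : Type*} [Field K] {f : PowerSeries K}

theorem coeff_pcomp_eq_sum_range (hf0 : constantCoeff f = 0) (A : PowerSeries K) {m n : ℕ}
    (hmn : m ≤ n) :
    coeff m (pcomp A f) = ∑ j ∈ Finset.range (n + 1), coeff j A * coeff m (f ^ j) := by
  rw [pcomp, coeff_mk]
  refine Finset.sum_subset (Finset.range_subset_range.mpr (by omega)) fun j _ hj => ?_
  rw [coeff_pow_eq_zero_of_lt hf0 (by simpa using hj), mul_zero]

theorem coeff_mul_pcomp (hf0 : constantCoeff f = 0) (A h : PowerSeries K) (n : ℕ) :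
    coeff n (h * pcomp A f) =
      ∑ j ∈ Finset.range (n + 1), coeff j A * coeff n (h * f ^ j) := by
  simp_rw [coeff_mul, Finset.mul_sum]
  rw [Finset.sum_comm]
  refine Finset.sum_congr rfl fun p hp => ?_
  rw [coeff_pcomp_eq_sum_range hf0 A (Finset.HasAntidiagonal.antidiagonal.snd_le hp),
    Finset.mul_sum]
  exact Finset.sum_congr rfl fun j _ => by ring

theorem coeff_succ_mul_X_mul_pcomp (hf0 : constantCoeff f = 0) (A h : PowerSeries K) (n : ℕ) :
    coeff (n + 1) (h * (X * pcomp A f)) =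
      ∑ j ∈ Finset.range (n + 1), coeff j A * coeff n (h * f ^ j) := by
  rw [mul_left_comm, coeff_succ_X_mul, coeff_mul_pcomp hf0]

end PowerSeries

theorem riordan_A_sequence {K : Type*} [Field K]
    (g f A : PowerSeries K)
    (hg : constantCoeff g ≠ 0)
    (hf0 : constantCoeff f = 0) :
    (∀ n k : ℕ, coeff (n + 1) (g * f ^ (k + 1)) =
      ∑ j ∈ Finset.range (n + 1), coeff j A * coeff n (g * f ^ (k + j))) ↔
    f = X * pcomp A f := by
  have hrec : ∀ n k : ℕ, (coeff (n + 1) (g * f ^ (k + 1)) =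
      ∑ j ∈ Finset.range (n + 1), coeff j A * coeff n (g * f ^ (k + j))) ↔
      coeff (n + 1) (g * f ^ k * f) = coeff (n + 1) (g * f ^ k * (X * pcomp A f)) := by
    intro n k
    rw [coeff_succ_mul_X_mul_pcomp hf0, mul_assoc g, ← pow_succ]
    simp only [mul_assoc, ← pow_add]
  simp only [hrec]
  constructor
  · intro H
    refine mul_left_cancel₀ (ne_zero_of_map hg) (ext fun m => ?_)
    cases m with
    | zero => simp [hf0]
    | succ n => simpa using H n 0
  · intro hfX n k
    rw [← hfX]
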